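/- arXiv:2207.09779 — 9 statements merged into one kernel-verified Lean document; each statement's English description precedes it below -/
import Mathlib

section
/- If f: ℝ → ℝ is differentiable at x with f'(x) > 0, then the internal morphological gradient g_r^-[f](x) = (f(x) − ε_r[f](x))/r converges to f'(x) as r → 0⁺. -/
open Filter Set Topology

noncomputable def erosion (f : ℝ → ℝ) (r x : ℝ) : ℝ :=
  sInf ((fun b => f (x + b)) '' {b : ℝ | |b| ≤ r})

section Erosion

variable {f : ℝ → ℝ} {r x m : ℝ}

theorem le_erosion (hr : 0 ≤ r) (h : ∀ b, |b| ≤ r → m ≤ f (x + b)) : m ≤ erosion f r x :=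
  le_csInf ⟨_, mem_image_of_mem _ (show |(0 : ℝ)| ≤ r by simpa using hr)⟩
    (forall_mem_image.2 h)

theorem erosion_le (h : ∀ b, |b| ≤ r → m ≤ f (x + b)) {b : ℝ} (hb : |b| ≤ r) :
    erosion f r x ≤ f (x + b) :=
  csInf_le ⟨m, forall_mem_image.2 h⟩ (mem_image_of_mem _ hb)

/-- If `f` is within `η r` of its tangent line of slope `c ≥ 0` on `[x - r, x + r]`, the
erosion is attained up to `η r` at the left endpoint, where the tangent line is lowest. -/
theorem abs_internal_gradient_sub_le {c η : ℝ} (hr : 0 < r) (hc : 0 ≤ c)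
    (h : ∀ b, |b| ≤ r → |f (x + b) - f x - b * c| ≤ η * r) :
    |(f x - erosion f r x) / r - c| ≤ η := by
  have hlower : ∀ b, |b| ≤ r → f x - (c + η) * r ≤ f (x + b) := by
    intro b hb
    have hfb := (abs_le.1 (h b hb)).1
    have hbr := (abs_le.1 hb).1
    nlinarith
  have hleft : |-r| ≤ r := by rw [abs_neg, abs_of_pos hr]
  have hge := le_erosion hr.le hlower
  have hle := erosion_le hlower hleft
  have hf_left := (abs_le.1 (h (-r) hleft)).2
  rw [abs_le, le_sub_iff_add_le, sub_le_iff_le_add, le_div_iff₀ hr, div_le_iff₀ hr]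
  constructor <;> nlinarith

end Erosion

theorem HasDerivAt.eventually_abs_sub_tangent_le {f : ℝ → ℝ} {c x η : ℝ}
    (hf : HasDerivAt f c x) (hη : 0 < η) :
    ∀ᶠ r in 𝓝 0, ∀ b, |b| ≤ r → |f (x + b) - f x - b * c| ≤ η * r := by
  obtain ⟨δ, hδ, hball⟩ :=
    Metric.eventually_nhds_iff_ball.1 ((hasDerivAt_iff_isLittleO_nhds_zero.1 hf).def hη)
  filter_upwards [Metric.ball_mem_nhds 0 hδ] with r hr b hb
  have hbδ : b ∈ Metric.ball 0 δ := by
    rw [Metric.mem_ball, dist_zero_right] at hr ⊢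
    exact hb.trans_lt ((le_abs_self r).trans_lt hr)
  calc |f (x + b) - f x - b * c| ≤ η * |b| := by simpa [mul_comm] using hball b hbδ
    _ ≤ η * r := mul_le_mul_of_nonneg_left hb hη.le

theorem internal_gradient_tendsto_deriv_general (f : ℝ → ℝ) (x : ℝ)
    (hf : DifferentiableAt ℝ f x) (hpos : 0 < deriv f x) :
    Tendsto (fun r : ℝ =>
        (f x - sInf ((fun b => f (x + b)) '' {b : ℝ | |b| ≤ r})) / r)
      (nhdsWithin 0 (Ioi 0)) (nhds (deriv f x)) := by
  change Tendsto (fun r => (f x - erosion f r x) / r) _ _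
  refine Metric.tendsto_nhds.2 fun ε hε => ?_
  filter_upwards [self_mem_nhdsWithin, nhdsWithin_le_nhds
    (hf.hasDerivAt.eventually_abs_sub_tangent_le (half_pos hε))] with r hr htangent
  rw [Real.dist_eq]
  exact (abs_internal_gradient_sub_le hr hpos.le htangent).trans_lt (half_lt_self hε)

/-- The internal morphological gradient `(f(x) − ε_r[f](x))/r` converges to
`f'(x)` as `r → 0⁺`, if `f'(x) > 0`. -/
theorem internal_gradient_tendsto_deriv (f : ℝ → ℝ) (x : ℝ)
    (hnbhd : ∀ᶠ y in nhds x, DifferentiableAt ℝ f y)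
    (hf : DifferentiableAt ℝ f x) (hpos : 0 < deriv f x) :
    Tendsto (fun r : ℝ =>
        (f x - sInf ((fun b => f (x + b)) '' {b : ℝ | |b| ≤ r})) / r)
      (nhdsWithin 0 (Ioi 0)) (nhds (deriv f x)) :=
  internal_gradient_tendsto_deriv_general f x hf hpos
end

section
/- If f: ℝ → ℝ is differentiable at x with f'(x) > 0, then the external morphological gradient g_r^+[f](x) = (δ_r[f](x) − f(x))/r converges to f'(x) as r → 0⁺. -/
open Filter Set Topology

/-! Near `x`, `f (x - b) - f x = -b f'(x) + o(r)` uniformly in `|b| ≤ r`, so the dilation exceeds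
`f x` by `r |f'(x)| + o(r)`: the supremum of the linear part `-b f'(x)` over `|b| ≤ r` is
`r |f'(x)|`, attained at `b = ± r`. -/

/-- The dilation `δ_r[f](x)` of `f` by the flat structuring element `[-r, r]`. -/
noncomputable def dilation (f : ℝ → ℝ) (r x : ℝ) : ℝ :=
  sSup ((fun b => f (x - b)) '' {b : ℝ | |b| ≤ r})

lemma le_dilation {f : ℝ → ℝ} {r x b : ℝ}
    (hbdd : BddAbove ((fun b => f (x - b)) '' {b : ℝ | |b| ≤ r})) (hb : |b| ≤ r) :
    f (x - b) ≤ dilation f r x :=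
  le_csSup hbdd (mem_image_of_mem _ hb)

lemma dilation_le {f : ℝ → ℝ} {r x c : ℝ} (hr : 0 ≤ r) (hc : ∀ b, |b| ≤ r → f (x - b) ≤ c) :
    dilation f r x ≤ c :=
  csSup_le ⟨f (x - 0), mem_image_of_mem _ (by simpa using hr)⟩ (forall_mem_image.2 hc)

lemma abs_dilation_sub_le {f : ℝ → ℝ} {r x L ε : ℝ} (hr : 0 ≤ r) (hε : 0 ≤ ε)
    (happrox : ∀ h, |h| ≤ r → |f (x + h) - f x - h * L| ≤ ε * |h|) :
    |dilation f r x - f x - |L| * r| ≤ ε * r := by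
  have upper : ∀ b, |b| ≤ r → f (x - b) ≤ f x + |L| * r + ε * r := by
    intro b hb
    rw [← abs_neg] at hb
    have happ := (abs_le.1 (happrox (-b) hb)).2
    rw [← sub_eq_add_neg] at happ
    have hlin : -b * L ≤ |L| * r :=
      calc -b * L ≤ |-b * L| := le_abs_self _
        _ = |L| * |-b| := by rw [abs_mul, mul_comm]
        _ ≤ |L| * r := by gcongr
    linarith [mul_le_mul_of_nonneg_left hb hε]
  obtain ⟨h, hh, hhL⟩ : ∃ h, |h| = r ∧ h * L = |L| * r := by
    rcases abs_choice L with hL | hL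
    · exact ⟨r, abs_of_nonneg hr, by rw [hL, mul_comm]⟩
    · exact ⟨-r, by rw [abs_neg, abs_of_nonneg hr], by rw [hL]; ring⟩
  have lower : f x + |L| * r - ε * r ≤ f (x - -h) := by
    have happ := (abs_le.1 (happrox h hh.le)).1
    rw [hh] at happ
    rw [sub_neg_eq_add]
    linarith
  have hbdd : BddAbove ((fun b => f (x - b)) '' {b : ℝ | |b| ≤ r}) :=
    ⟨_, forall_mem_image.2 upper⟩
  have hge := le_dilation hbdd (b := -h) (by rw [abs_neg, hh])
  have hle := dilation_le hr upper
  rw [abs_le]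
  constructor <;> linarith

theorem tendsto_dilation_sub_div {f : ℝ → ℝ} {x L : ℝ} (hf : HasDerivAt f L x) :
    Tendsto (fun r => (dilation f r x - f x) / r) (𝓝[>] 0) (𝓝 |L|) := by
  rw [Metric.tendsto_nhds]
  intro ε hε
  have happrox : ∀ᶠ h in 𝓝 0, |f (x + h) - f x - h * L| ≤ ε / 2 * |h| := by
    simpa [Real.norm_eq_abs, smul_eq_mul] using
      (hasDerivAt_iff_isLittleO_nhds_zero.1 hf).def (half_pos hε)
  filter_upwards [self_mem_nhdsWithin,
    nhdsWithin_le_nhds (eventually_closedBall_subset happrox)] with r hr hball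
  have hr : 0 < r := hr
  have key := abs_dilation_sub_le hr.le (half_pos hε).le fun h hh =>
    hball (by rwa [Metric.mem_closedBall, dist_zero_right])
  rw [Real.dist_eq, div_sub' hr.ne', mul_comm r, abs_div, abs_of_pos hr, div_lt_iff₀ hr]
  linarith [mul_pos hε hr]

theorem external_gradient_tendsto_deriv_general (f : ℝ → ℝ) (x : ℝ)
    (hf : DifferentiableAt ℝ f x) (hpos : 0 < deriv f x) :
    Tendsto (fun r : ℝ =>
        (sSup ((fun b => f (x - b)) '' {b : ℝ | |b| ≤ r}) - f x) / r)
      (nhdsWithin 0 (Ioi 0)) (nhds (deriv f x)) := by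
  rw [← abs_of_pos hpos]
  exact tendsto_dilation_sub_div hf.hasDerivAt

/-- The external morphological gradient `(δ_r[f](x) − f(x))/r` converges to
`f'(x)` as `r → 0⁺`, if `f'(x) > 0`. -/
theorem external_gradient_tendsto_deriv (f : ℝ → ℝ) (x : ℝ)
    (hnbhd : ∀ᶠ y in nhds x, DifferentiableAt ℝ f y)
    (hf : DifferentiableAt ℝ f x) (hpos : 0 < deriv f x) :
    Tendsto (fun r : ℝ =>
        (sSup ((fun b => f (x - b)) '' {b : ℝ | |b| ≤ r}) - f x) / r)
      (nhdsWithin 0 (Ioi 0)) (nhds (deriv f x)) :=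
  external_gradient_tendsto_deriv_general f x hf hpos
end

section
/- For a continuously differentiable f: ℝ² → ℝ with ∇f(x) ≠ 0, the internal morphological gradient (f(x) − ε_r[f](x))/r, where ε_r is the erosion with the closed Euclidean disk of radius r, converges to |∇f(x)| as r → 0⁺. -/
open Filter Set Metric Topology Asymptotics
open scoped RealInnerProductSpace

/-!
The first-order Taylor expansion `f (x + b) = f x + ⟪∇f x, b⟫ + o(‖b‖)` holds uniformly on the
disk `‖b‖ ≤ r`, so the erosion `inf_{‖b‖ ≤ r} f (x + b)` differs by `o(r)` from the infimum of the
affine part, which is `f x - r ‖∇f x‖`, attained at `b = -(r / ‖∇f x‖) • ∇f x`.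
-/

theorem sInf_image_le_sInf_image_add {α : Type*} {s : Set α} (hs : s.Nonempty) {u v : α → ℝ}
    (hu : BddBelow (u '' s)) {c : ℝ} (huv : ∀ a ∈ s, u a ≤ v a + c) :
    sInf (u '' s) ≤ sInf (v '' s) + c := by
  rw [← sub_le_iff_le_add]
  refine le_csInf (hs.image v) (forall_mem_image.2 fun a ha => ?_)
  linarith [csInf_le hu (mem_image_of_mem u ha), huv a ha]

theorem abs_sInf_image_sub_sInf_image_le {α : Type*} {s : Set α} (hs : s.Nonempty)
    {u v : α → ℝ} (hv : BddBelow (v '' s)) {c : ℝ} (huv : ∀ a ∈ s, |u a - v a| ≤ c) :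
    |sInf (u '' s) - sInf (v '' s)| ≤ c := by
  have hu : BddBelow (u '' s) := by
    obtain ⟨m, hm⟩ := hv
    refine ⟨m - c, forall_mem_image.2 fun a ha => ?_⟩
    linarith [hm (mem_image_of_mem v ha), abs_le.1 (huv a ha)]
  rw [abs_sub_le_iff, sub_le_iff_le_add', sub_le_iff_le_add']
  exact ⟨sInf_image_le_sInf_image_add hs hu fun a ha => by linarith [abs_le.1 (huv a ha)],
    sInf_image_le_sInf_image_add hs hv fun a ha => by linarith [abs_le.1 (huv a ha)]⟩

section InnerProductSpace

variable {E : Type*} [NormedAddCommGroup E] [InnerProductSpace ℝ E]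

theorem isLeast_affine_image_closedBall (c : ℝ) (g : E) {r : ℝ} (hr : 0 ≤ r) :
    IsLeast ((fun b => c + ⟪g, b⟫) '' closedBall 0 r) (c - r * ‖g‖) := by
  refine ⟨⟨-(r / ‖g‖) • g, ?_, ?_⟩, forall_mem_image.2 fun b hb => ?_⟩
  · rw [mem_closedBall_zero_iff, norm_smul, norm_neg, Real.norm_of_nonneg (by positivity)]
    rcases eq_or_ne ‖g‖ 0 with hg | hg
    · simpa [hg] using hr
    · rw [div_mul_cancel₀ _ hg]
  · dsimp only
    rw [real_inner_smul_right, real_inner_self_eq_norm_sq]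
    rcases eq_or_ne ‖g‖ 0 with hg | hg
    · simp [hg]
    · field_simp
      ring
  · have hb : ‖b‖ ≤ r := mem_closedBall_zero_iff.1 hb
    calc c - r * ‖g‖ ≤ c - ‖g‖ * ‖b‖ := by nlinarith [norm_nonneg g]
      _ ≤ c + ⟪g, b⟫ := by linarith [neg_le_of_abs_le (abs_real_inner_le_norm g b)]

variable [CompleteSpace E] {f : E → ℝ} {g x : E}

theorem HasGradientAt.isLittleO_sInf_image_closedBall (h : HasGradientAt f g x) :
    (fun r => sInf ((fun b => f (x + b)) '' closedBall 0 r) - (f x - r * ‖g‖))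
      =o[𝓝[>] 0] fun r => r := by
  rw [isLittleO_iff]
  intro c hc
  obtain ⟨δ, hδ, hball⟩ :=
    eventually_nhds_iff_ball.1 ((hasGradientAt_iff_isLittleO_nhds_zero.1 h).def hc)
  filter_upwards [Ioo_mem_nhdsGT hδ] with r ⟨hr, hrδ⟩
  have haffine := isLeast_affine_image_closedBall (f x) g hr.le
  rw [Real.norm_eq_abs, Real.norm_eq_abs, abs_of_pos hr, ← haffine.csInf_eq]
  refine abs_sInf_image_sub_sInf_image_le (nonempty_closedBall.2 hr.le) haffine.bddBelow
    fun b hb => ?_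
  have hb : ‖b‖ ≤ r := mem_closedBall_zero_iff.1 hb
  calc |f (x + b) - (f x + ⟪g, b⟫)| = ‖f (x + b) - f x - ⟪g, b⟫‖ := by
        rw [Real.norm_eq_abs, sub_sub]
    _ ≤ c * ‖b‖ := hball b (mem_ball_zero_iff.2 (hb.trans_lt hrδ))
    _ ≤ c * r := by gcongr

theorem HasGradientAt.tendsto_internal_gradient (h : HasGradientAt f g x) :
    Tendsto (fun r => (f x - sInf ((fun b => f (x + b)) '' closedBall 0 r)) / r)
      (𝓝[>] 0) (𝓝 ‖g‖) := by
  have hlim := (h.isLittleO_sInf_image_closedBall.tendsto_div_nhds_zero).const_sub ‖g‖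
  rw [sub_zero] at hlim
  refine hlim.congr' (eventually_nhdsWithin_of_forall fun r (hr : 0 < r) => ?_)
  field_simp
  ring

end InnerProductSpace

theorem internal_gradient_tendsto_gradient_norm_general
    (f : EuclideanSpace ℝ (Fin 2) → ℝ) (hf : ContDiff ℝ 1 f)
    (x : EuclideanSpace ℝ (Fin 2)) :
    Tendsto (fun r : ℝ =>
        (f x - sInf ((fun b => f (x + b)) '' Metric.closedBall 0 r)) / r)
      (nhdsWithin 0 (Ioi 0)) (nhds ‖gradient f x‖) :=
  ((hf.differentiable one_ne_zero x).hasGradientAt).tendsto_internal_gradient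

/-- For `f ∈ C¹(ℝ²)` with nonvanishing gradient, the internal morphological
gradient with disk structuring elements converges to `‖∇f(x)‖` as `r → 0⁺`. -/
theorem internal_gradient_tendsto_gradient_norm
    (f : EuclideanSpace ℝ (Fin 2) → ℝ) (hf : ContDiff ℝ 1 f)
    (x : EuclideanSpace ℝ (Fin 2)) (hx : gradient f x ≠ 0) :
    Tendsto (fun r : ℝ =>
        (f x - sInf ((fun b => f (x + b)) '' Metric.closedBall 0 r)) / r)
      (nhdsWithin 0 (Ioi 0)) (nhds ‖gradient f x‖) :=
  internal_gradient_tendsto_gradient_norm_general f hf x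
end

section
/- One step of the 1-D Rouy–Tourin dilation scheme u_i^{k+1} = u_i^k + τ·max{0, (u_{i+1}^k − u_i^k)/h, (u_{i−1}^k − u_i^k)/h} satisfies the maximum–minimum principle: if τ ≤ h, then min_j u_j^k ≤ u_i^{k+1} ≤ max_j u_j^k for all i. -/
/-!
Writing `c = τ / h`, the update is `u i + c * (m i - u i)` with `m i` the maximum of `u` over
the stencil `{i - 1, i, i + 1}`. For `0 ≤ c ≤ 1` this lies between `u i` and `m i`, and both
lie between the infimum and the supremum of `u`.
-/

section DilationStep

variable {α : Type*} [CommRing α] [LinearOrder α] [IsStrictOrderedRing α]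

/-- The Rouy–Tourin dilation step with Courant number `c = τ / h`. -/
def dilationStep (c : α) (u : ℤ → α) (i : ℤ) : α :=
  u i + c * max 0 (max (u (i + 1) - u i) (u (i - 1) - u i))

theorem dilationStep_eq (c : α) (u : ℤ → α) (i : ℤ) :
    dilationStep c u i = u i + c * (max (u i) (max (u (i + 1)) (u (i - 1))) - u i) := by
  rw [dilationStep, ← max_sub_sub_right, ← max_sub_sub_right, sub_self]

theorem le_dilationStep {c : α} (hc : 0 ≤ c) (u : ℤ → α) (i : ℤ) :
    u i ≤ dilationStep c u i :=
  le_add_of_nonneg_right (mul_nonneg hc (le_max_left _ _))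

theorem dilationStep_le {c : α} (hc : c ≤ 1) (u : ℤ → α) (i : ℤ) :
    dilationStep c u i ≤ max (u i) (max (u (i + 1)) (u (i - 1))) := by
  rw [dilationStep_eq]
  have hm : 0 ≤ max (u i) (max (u (i + 1)) (u (i - 1))) - u i := sub_nonneg.2 (le_max_left _ _)
  linarith [mul_le_of_le_one_left hm hc]

end DilationStep

/-- One step of the 1-D Rouy–Tourin dilation scheme satisfies the
maximum–minimum principle when `τ ≤ h`. -/
theorem rouy_tourin_1d_max_min (u v : ℤ → ℝ)
    (hbdd : BddAbove (Set.range u)) (hbdd' : BddBelow (Set.range u))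
    (h τ : ℝ) (hh : 0 < h) (hτ : 0 < τ) (hτh : τ ≤ h)
    (hv : ∀ i, v i = u i + (τ / h) * max 0 (max (u (i + 1) - u i) (u (i - 1) - u i))) :
    ∀ i, sInf (Set.range u) ≤ v i ∧ v i ≤ sSup (Set.range u) := by
  obtain rfl : v = dilationStep (τ / h) u := funext hv
  have hc₀ : 0 ≤ τ / h := div_nonneg hτ.le hh.le
  have hc₁ : τ / h ≤ 1 := (div_le_one hh).2 hτh
  have hle_sSup (j : ℤ) : u j ≤ sSup (Set.range u) := le_csSup hbdd ⟨j, rfl⟩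
  intro i
  exact ⟨(csInf_le hbdd' ⟨i, rfl⟩).trans (le_dilationStep hc₀ u i),
    (dilationStep_le hc₁ u i).trans (max_le (hle_sSup i) (max_le (hle_sSup _) (hle_sSup _)))⟩
end

section
/- One step of the 2-D Rouy–Tourin dilation scheme satisfies the maximum–minimum principle under the time step restriction τ ≤ h/√2: if u^{k+1}_{i,j} = u^k_{i,j} + τ·sqrt( max{0, (u^k_{i+1,j}−u^k_{i,j})/h, (u^k_{i−1,j}−u^k_{i,j})/h}² + max{0, (u^k_{i,j+1}−u^k_{i,j})/h, (u^k_{i,j−1}−u^k_{i,j})/h}² ), then min u^k ≤ u^{k+1}_{i,j} ≤ max u^k for all (i,j). -/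
/-!
The scheme moves `u (i, j)` up by `τ` times the Euclidean length of an upwind gradient whose
two components lie in `[0, (sup u - u (i, j)) / h]`. That length is at most
`√2 (sup u - u (i, j)) / h`, so `τ ≤ h / √2` keeps the new value below `sup u`; it never moves
down, so it stays above `inf u`.
-/

open Real

noncomputable def upwindSlope (h c a b : ℝ) : ℝ := max 0 (max ((a - c) / h) ((b - c) / h))

lemma upwindSlope_nonneg (h c a b : ℝ) : 0 ≤ upwindSlope h c a b := le_max_left _ _

lemma upwindSlope_le {h c a b M : ℝ} (hh : 0 < h) (hc : c ≤ M) (ha : a ≤ M) (hb : b ≤ M) :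
    upwindSlope h c a b ≤ (M - c) / h := by
  have slope_le {x : ℝ} (hx : x ≤ M) : (x - c) / h ≤ (M - c) / h := by gcongr
  exact max_le (div_nonneg (sub_nonneg.2 hc) hh.le) (max_le (slope_le ha) (slope_le hb))

lemma sqrt_sq_add_sq_le_sqrt_two_mul {a b d : ℝ} (ha : |a| ≤ d) (hb : |b| ≤ d) :
    √(a ^ 2 + b ^ 2) ≤ √2 * d := by
  have hd : 0 ≤ d := (abs_nonneg a).trans ha
  calc √(a ^ 2 + b ^ 2) ≤ √(2 * d ^ 2) := by
        gcongr
        nlinarith [sq_le_sq' (abs_le.1 ha).1 (abs_le.1 ha).2,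
          sq_le_sq' (abs_le.1 hb).1 (abs_le.1 hb).2]
    _ = √2 * d := by rw [sqrt_mul zero_le_two, sqrt_sq hd]

lemma add_mul_sqrt_le_of_slopes_le {h τ c A B M : ℝ} (hh : 0 < h) (hτh : τ ≤ h / √2)
    (hA : 0 ≤ A) (hAM : A ≤ (M - c) / h) (hB : 0 ≤ B) (hBM : B ≤ (M - c) / h) :
    c + τ * √(A ^ 2 + B ^ 2) ≤ M := by
  have hgrad : √(A ^ 2 + B ^ 2) ≤ √2 * ((M - c) / h) :=
    sqrt_sq_add_sq_le_sqrt_two_mul (by rwa [abs_of_nonneg hA]) (by rwa [abs_of_nonneg hB])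
  have hstep : τ * √(A ^ 2 + B ^ 2) ≤ h / √2 * (√2 * ((M - c) / h)) :=
    mul_le_mul hτh hgrad (sqrt_nonneg _) (by positivity)
  have hcancel : h / √2 * (√2 * ((M - c) / h)) = M - c := by field_simp
  linarith

/-- One step of the 2-D Rouy–Tourin dilation scheme satisfies the
maximum–minimum principle under the time step restriction `τ ≤ h/√2`. -/
theorem rouy_tourin_2d_max_min (u v : ℤ × ℤ → ℝ)
    (hbdd : BddAbove (Set.range u)) (hbdd' : BddBelow (Set.range u))
    (h τ : ℝ) (hh : 0 < h) (hτ : 0 < τ) (hτh : τ ≤ h / Real.sqrt 2)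
    (hv : ∀ i j, v (i, j) = u (i, j) + τ * Real.sqrt
      ((max 0 (max ((u (i + 1, j) - u (i, j)) / h) ((u (i - 1, j) - u (i, j)) / h))) ^ 2 +
       (max 0 (max ((u (i, j + 1) - u (i, j)) / h) ((u (i, j - 1) - u (i, j)) / h))) ^ 2)) :
    ∀ i j, sInf (Set.range u) ≤ v (i, j) ∧ v (i, j) ≤ sSup (Set.range u) := by
  intro i j
  have le_sup (p : ℤ × ℤ) : u p ≤ sSup (Set.range u) := le_csSup hbdd ⟨p, rfl⟩
  have inf_le (p : ℤ × ℤ) : sInf (Set.range u) ≤ u p := csInf_le hbdd' ⟨p, rfl⟩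
  rw [hv i j]
  constructor
  · exact (inf_le _).trans (le_add_of_nonneg_right (by positivity))
  · exact add_mul_sqrt_le_of_slopes_le hh hτh (upwindSlope_nonneg ..)
      (upwindSlope_le hh (le_sup _) (le_sup _) (le_sup _)) (upwindSlope_nonneg ..)
      (upwindSlope_le hh (le_sup _) (le_sup _) (le_sup _))
end

section
/- The 1-D Rouy–Tourin dilation step preserves monotonicity: if u : ℤ → ℝ satisfies u_{i−1} ≤ u_i for all i, and v_i = u_i + (τ/h)·max{0, u_{i+1} − u_i, u_{i−1} − u_i} with 0 < τ ≤ h, then v_{i−1} ≤ v_i for all i. -/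
/-!
On a nondecreasing signal the upwind maximum selects the forward difference, so the step is
`v i = (1 - λ) * u i + λ * u (i + 1)` with `λ = τ / h ∈ [0, 1]`: a convex combination of two
consecutive values, which is monotone in both of them.
-/

section OrderedRing

variable {R : Type*} [Ring R] [LinearOrder R] [IsOrderedRing R]

lemma max_zero_max_sub_sub_eq_of_le {a b c : R} (hab : a ≤ b) (hbc : b ≤ c) :
    max 0 (max (c - b) (a - b)) = c - b := by
  rw [max_eq_left (sub_le_sub_right (hab.trans hbc) b), max_eq_right (sub_nonneg.2 hbc)]

lemma add_mul_sub_le_add_mul_sub {t a b a' b' : R} (ht₀ : 0 ≤ t) (ht₁ : t ≤ 1)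
    (ha : a ≤ a') (hb : b ≤ b') : a + t * (b - a) ≤ a' + t * (b' - a') :=
  calc a + t * (b - a) = (1 - t) * a + t * b := by noncomm_ring
    _ ≤ (1 - t) * a' + t * b' := add_le_add (mul_le_mul_of_nonneg_left ha (sub_nonneg.2 ht₁))
        (mul_le_mul_of_nonneg_left hb ht₀)
    _ = a' + t * (b' - a') := by noncomm_ring

end OrderedRing

/-- The 1-D Rouy–Tourin dilation step preserves monotonicity. -/
theorem rouy_tourin_preserves_monotonicity (u v : ℤ → ℝ)
    (hmono : ∀ i : ℤ, u (i - 1) ≤ u i)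
    (h τ : ℝ) (hh : 0 < h) (hτ : 0 < τ) (hτh : τ ≤ h)
    (hv : ∀ i, v i = u i + (τ / h) * max 0 (max (u (i + 1) - u i) (u (i - 1) - u i))) :
    ∀ i : ℤ, v (i - 1) ≤ v i := by
  have hsucc (i : ℤ) : u i ≤ u (i + 1) := by simpa using hmono (i + 1)
  have hv' (i : ℤ) : v i = u i + τ / h * (u (i + 1) - u i) := by
    rw [hv, max_zero_max_sub_sub_eq_of_le (hmono i) (hsucc i)]
  intro i
  rw [hv', hv', sub_add_cancel]
  exact add_mul_sub_le_add_mul_sub (div_nonneg hτ.le hh.le) ((div_le_one hh).2 hτh)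
    (hmono i) (hsucc i)
end

section
/- Let u : ℤ → ℝ be nondecreasing and concave (u_{j+1} − u_j ≤ u_j − u_{j−1} for all j), and define the SIFE update u'_i = u_i − (τ/r²)(δ_{2r}[u]_i − 2δ_r[u]_i + u_i) with δ_r[u]_i = u_i + (r/h)(u_{i+1} − u_i) and δ_{2r}[u]_i = u_i + (2r/h)(u_{i+1} − u_i) + (r²/h²)(u_{i+2} − 2u_{i+1} + u_i). If 0 < r ≤ h and 0 < τ ≤ r², then u'_{i−1} ≤ u'_i for all i. -/
/-!
Since `δ_{2r}[u] - 2 δ_r[u] + u = (r/h)² Δ²u` with `Δ²u_i = u_{i+2} - 2u_{i+1} + u_i`, the SIFE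
update is the explicit scheme `u'_i = u_i - c Δ²u_i` with `c = τ/h² ∈ (0, 1]`. Writing
`d_j = u_{j+1} - u_j`, its increments are `u'_i - u'_{i-1} = (1 - c) d_{i-1} + c d_i + c (d_i - d_{i+1})`,
a sum of nonnegative terms when `u` is nondecreasing (`d ≥ 0`) and concave (`d` nonincreasing).
-/

theorem explicit_heat_step_pred_le {𝕜 : Type*} [Field 𝕜] [LinearOrder 𝕜] [IsStrictOrderedRing 𝕜]
    {u : ℤ → 𝕜} (hmono : ∀ j : ℤ, u j ≤ u (j + 1))
    (hconc : ∀ j : ℤ, u (j + 1) - u j ≤ u j - u (j - 1)) {c : 𝕜} (hc₀ : 0 ≤ c) (hc₁ : c ≤ 1)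
    (i : ℤ) :
    u (i - 1) - c * (u (i + 1) - 2 * u i + u (i - 1)) ≤
      u i - c * (u (i + 2) - 2 * u (i + 1) + u i) := by
  have hd_prev : 0 ≤ u i - u (i - 1) := by
    simpa using sub_nonneg.2 (hmono (i - 1))
  have hd : 0 ≤ u (i + 1) - u i := sub_nonneg.2 (hmono i)
  have hd_next : u (i + 2) - u (i + 1) ≤ u (i + 1) - u i := by
    simpa [add_assoc, one_add_one_eq_two] using hconc (i + 1)
  linarith [mul_nonneg (sub_nonneg.2 hc₁) hd_prev, mul_nonneg hc₀ hd,
    mul_nonneg hc₀ (sub_nonneg.2 hd_next)]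

theorem sife_correction_eq {𝕜 : Type*} [Field 𝕜] {r : 𝕜} (hr : r ≠ 0) (h τ a b c : 𝕜) :
    τ / r ^ 2 * ((a + (2 * r / h) * (b - a) + (r ^ 2 / h ^ 2) * (c - 2 * b + a))
        - 2 * (a + (r / h) * (b - a)) + a) = τ / h ^ 2 * (c - 2 * b + a) := by
  field_simp
  ring

theorem sife_preserves_monotonicity_general (u u' : ℤ → ℝ)
    (hmono : ∀ j : ℤ, u j ≤ u (j + 1))
    (hconc : ∀ j : ℤ, u (j + 1) - u j ≤ u j - u (j - 1))
    (r h τ : ℝ) (hr : 0 < r) (hrh : r ≤ h)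
    (hτ : 0 < τ) (hτr : τ ≤ r ^ 2)
    (hu' : ∀ i : ℤ, u' i = u i - (τ / r ^ 2) *
      ((u i + (2 * r / h) * (u (i + 1) - u i)
          + (r ^ 2 / h ^ 2) * (u (i + 2) - 2 * u (i + 1) + u i))
        - 2 * (u i + (r / h) * (u (i + 1) - u i)) + u i)) :
    ∀ i : ℤ, u' (i - 1) ≤ u' i := by
  have hexplicit : ∀ i, u' i = u i - τ / h ^ 2 * (u (i + 2) - 2 * u (i + 1) + u i) := fun i => by
    rw [hu' i, sife_correction_eq hr.ne']
  have hc₁ : τ / h ^ 2 ≤ 1 :=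
    div_le_one_of_le₀ (hτr.trans (pow_le_pow_left₀ hr.le hrh 2)) (sq_nonneg h)
  intro i
  rw [hexplicit, hexplicit, show i - 1 + 2 = i + 1 by ring, sub_add_cancel]
  exact explicit_heat_step_pred_le hmono hconc (div_nonneg hτ.le (sq_nonneg h)) hc₁ i

/-- The SIFE update preserves monotonicity for nondecreasing concave signals:
with `u'_i = u_i − (τ/r²)(δ_{2r}[u]_i − 2δ_r[u]_i + u_i)`, if `0 < r ≤ h` and
`0 < τ ≤ r²`, then `u'` is nondecreasing. -/
theorem sife_preserves_monotonicity (u u' : ℤ → ℝ)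
    (hmono : ∀ j : ℤ, u j ≤ u (j + 1))
    (hconc : ∀ j : ℤ, u (j + 1) - u j ≤ u j - u (j - 1))
    (r h τ : ℝ) (hh : 0 < h) (hr : 0 < r) (hrh : r ≤ h)
    (hτ : 0 < τ) (hτr : τ ≤ r ^ 2)
    (hu' : ∀ i : ℤ, u' i = u i - (τ / r ^ 2) *
      ((u i + (2 * r / h) * (u (i + 1) - u i)
          + (r ^ 2 / h ^ 2) * (u (i + 2) - 2 * u (i + 1) + u i))
        - 2 * (u i + (r / h) * (u (i + 1) - u i)) + u i)) :
    ∀ i : ℤ, u' (i - 1) ≤ u' i :=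
  sife_preserves_monotonicity_general u u' hmono hconc r h τ hr hrh hτ hτr hu'
end

section
/- If a discrete signal u : ℤ → ℝ has a local maximum at i, i.e. u_{i−1} ≤ u_i and u_{i+1} ≤ u_i (not necessarily strictly), then the 1-D minmod SILD update leaves u_i unchanged: with mm₁ = mm((u_{i+2}−u_{i+1})/h,(u_{i+1}−u_i)/h,(u_i−u_{i−1})/h) and mm₂ = mm((u_{i+1}−u_i)/h,(u_i−u_{i−1})/h,(u_{i−1}−u_{i−2})/h), the update u_i^{new} = u_i − (τ/h)(mm₁ − mm₂) satisfies u_i^{new} = u_i. -/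
/-- The minmod function. -/
noncomputable def mm (a b c : ℝ) : ℝ :=
  if (0 < a ∧ 0 < b ∧ 0 < c) ∨ (a < 0 ∧ b < 0 ∧ c < 0) then
    Real.sign a * min |a| (min |b| |c|)
  else 0

lemma mm_zero_of_mixed {a b c : ℝ} (hb : b ≤ 0) (hc : 0 ≤ c) : mm a b c = 0 := by
  unfold mm
  rw [if_neg]
  rintro (⟨_, hb', _⟩ | ⟨_, _, hc'⟩) <;> linarith

lemma mm_zero_of_mixed' {a b c : ℝ} (ha : a ≤ 0) (hb : 0 ≤ b) : mm a b c = 0 := by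
  unfold mm
  rw [if_neg]
  rintro (⟨ha', _, _⟩ | ⟨_, hb', _⟩) <;> linarith

/-- At a weak local maximum, the 1-D minmod SILD update leaves the value
unchanged. -/
theorem sild_fixes_local_maxima (u : ℤ → ℝ) (i : ℤ)
    (h τ : ℝ) (hh : 0 < h) (hτ : 0 < τ)
    (hmax₁ : u (i - 1) ≤ u i) (hmax₂ : u (i + 1) ≤ u i) :
    u i - (τ / h) *
      (mm ((u (i + 2) - u (i + 1)) / h) ((u (i + 1) - u i) / h) ((u i - u (i - 1)) / h)
       - mm ((u (i + 1) - u i) / h) ((u i - u (i - 1)) / h) ((u (i - 1) - u (i - 2)) / h))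
    = u i := by
  have hb : (u (i + 1) - u i) / h ≤ 0 := div_nonpos_of_nonpos_of_nonneg (by linarith) hh.le
  have hc : 0 ≤ (u i - u (i - 1)) / h := div_nonneg (by linarith) hh.le
  rw [mm_zero_of_mixed hb hc, mm_zero_of_mixed' hb hc]
  ring
end

section
/- For a C² function f: ℝ → ℝ, the difference of external and internal morphological gradients approximates the second derivative: ((δ_r[f](x) − f(x))/r − (f(x) − ε_r[f](x))/r) / r → f''(x)·c as r → 0⁺ for some constant independent of f whenever f'(x) > 0; in fact, if f'(x) > 0 then (δ_r[f](x) − 2f(x) + ε_r[f](x))/r² → f''(x) as r → 0⁺. -/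
/-!
Near a point where `f' > 0` the function is increasing, so on the window `[x - r, x + r]` the
dilation and erosion are attained at the endpoints: `δ_r[f](x) = f (x + r)` and
`ε_r[f](x) = f (x - r)`. The quotient is then the symmetric second difference
`(f (x + r) - 2 f x + f (x - r)) / r²`, which L'Hôpital's rule reduces to the symmetric
difference quotient `(f' (x + r) - f' (x - r)) / (2 r)` of `f'`, whose limit is `f'' x`.
-/

open Filter Set Topology

theorem setOf_abs_le_eq_Icc (r : ℝ) : {b : ℝ | |b| ≤ r} = Icc (-r) r := by
  ext b
  simp [abs_le]

theorem image_const_add_setOf_abs_le (x r : ℝ) :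
    (x + ·) '' {b : ℝ | |b| ≤ r} = Icc (x - r) (x + r) := by
  rw [setOf_abs_le_eq_Icc, image_const_add_Icc, ← sub_eq_add_neg]

theorem image_const_sub_setOf_abs_le (x r : ℝ) :
    (x - ·) '' {b : ℝ | |b| ≤ r} = Icc (x - r) (x + r) := by
  rw [setOf_abs_le_eq_Icc, image_const_sub_Icc, sub_neg_eq_add]

section Window

variable {β : Type*} [ConditionallyCompleteLattice β] {f : ℝ → β} {x r : ℝ}

theorem MonotoneOn.csSup_image_const_sub_setOf_abs_le (hf : MonotoneOn f (Icc (x - r) (x + r)))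
    (hr : 0 ≤ r) : sSup ((fun b => f (x - b)) '' {b : ℝ | |b| ≤ r}) = f (x + r) := by
  rw [← image_image f (x - ·), image_const_sub_setOf_abs_le]
  exact (hf.map_isGreatest (isGreatest_Icc (by linarith))).csSup_eq

theorem MonotoneOn.csInf_image_const_add_setOf_abs_le (hf : MonotoneOn f (Icc (x - r) (x + r)))
    (hr : 0 ≤ r) : sInf ((fun b => f (x + b)) '' {b : ℝ | |b| ≤ r}) = f (x - r) := by
  rw [← image_image f (x + ·), image_const_add_setOf_abs_le]
  exact (hf.map_isLeast (isLeast_Icc (by linarith))).csInf_eq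

end Window

theorem eventually_monotoneOn_Icc_of_deriv_nonneg {f : ℝ → ℝ} {x : ℝ}
    (hf : ∀ᶠ y in 𝓝 x, DifferentiableAt ℝ f y) (hf' : ∀ᶠ y in 𝓝 x, 0 ≤ deriv f y) :
    ∀ᶠ r in 𝓝 0, MonotoneOn f (Icc (x - r) (x + r)) := by
  obtain ⟨ε, hε, hball⟩ := Metric.eventually_nhds_iff_ball.mp (hf.and hf')
  filter_upwards [Iio_mem_nhds hε] with r hr
  have hsub : Icc (x - r) (x + r) ⊆ Metric.ball x ε := by
    rw [← Real.closedBall_eq_Icc]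
    exact Metric.closedBall_subset_ball hr
  exact monotoneOn_of_deriv_nonneg (convex_Icc _ _)
    (fun y hy => (hball y (hsub hy)).1.continuousAt.continuousWithinAt)
    (fun y hy => (hball y (hsub (interior_subset hy))).1.differentiableWithinAt)
    (fun y hy => (hball y (hsub (interior_subset hy))).2)

theorem HasDerivAt.tendsto_symmetric_slope_zero {g : ℝ → ℝ} {x c : ℝ} (h : HasDerivAt g c x) :
    Tendsto (fun r => (g (x + r) - g (x - r)) / (2 * r)) (𝓝[≠] 0) (𝓝 c) := by
  have hG : HasDerivAt (fun r => g (x + r) - g (x - r)) (c + c) 0 := by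
    have hright := HasDerivAt.comp_const_add x 0 (by rwa [add_zero])
    have hleft := HasDerivAt.comp_const_sub x 0 (by rwa [sub_zero])
    simpa using hright.fun_sub hleft
  have := hG.tendsto_slope_zero.div_const 2
  rw [add_self_div_two] at this
  refine this.congr fun r => ?_
  simp only [zero_add, add_zero, sub_zero, sub_self, smul_eq_mul]
  ring

theorem tendsto_symmetric_second_difference {f : ℝ → ℝ} {x c : ℝ}
    (hf : ∀ᶠ y in 𝓝 x, DifferentiableAt ℝ f y) (hf' : HasDerivAt (deriv f) c x) :
    Tendsto (fun r => (f (x + r) - 2 * f x + f (x - r)) / r ^ 2) (𝓝[≠] 0) (𝓝 c) := by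
  have hnum : ∀ᶠ r in 𝓝 (0 : ℝ), HasDerivAt (fun r => f (x + r) - 2 * f x + f (x - r))
      (deriv f (x + r) - deriv f (x - r)) r := by
    have hright : Tendsto (x + ·) (𝓝 0) (𝓝 x) := by
      simpa using (continuous_const_add x).tendsto 0
    have hleft : Tendsto (x - ·) (𝓝 0) (𝓝 x) := by
      simpa using (continuous_sub_left x).tendsto 0
    filter_upwards [hright.eventually hf, hleft.eventually hf] with r hr_right hr_left
    simpa [sub_eq_add_neg] using
      ((hr_right.hasDerivAt.comp_const_add x r).sub_const (2 * f x)).fun_add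
        (hr_left.hasDerivAt.comp_const_sub x r)
  refine HasDerivAt.lhopital_zero_nhdsNE (nhdsWithin_le_nhds hnum)
    (Eventually.of_forall fun r => by simpa using hasDerivAt_pow 2 r)
    (eventually_nhdsWithin_of_forall fun r hr => mul_ne_zero two_ne_zero hr) ?_ ?_
    hf'.tendsto_symmetric_slope_zero
  · have := hnum.self_of_nhds.continuousAt.tendsto.mono_left (nhdsWithin_le_nhds (s := {0}ᶜ))
    convert this using 2
    simp only [add_zero, sub_zero]
    ring
  · simpa using ((continuous_pow 2).tendsto (0 : ℝ)).mono_left nhdsWithin_le_nhds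

/-- For `f ∈ C²(ℝ)` with `f'(x) > 0`, the morphological second derivative
approximation converges: `(δ_r[f](x) − 2f(x) + ε_r[f](x))/r² → f''(x)` as
`r → 0⁺`. -/
theorem morphological_second_derivative (f : ℝ → ℝ) (hf : ContDiff ℝ 2 f)
    (x : ℝ) (hpos : 0 < deriv f x) :
    Tendsto (fun r : ℝ =>
        (sSup ((fun b => f (x - b)) '' {b : ℝ | |b| ≤ r}) - 2 * f x +
          sInf ((fun b => f (x + b)) '' {b : ℝ | |b| ≤ r})) / r ^ 2)
      (nhdsWithin 0 (Ioi 0)) (nhds (deriv (deriv f) x)) := by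
  have hdiff : ∀ᶠ y in 𝓝 x, DifferentiableAt ℝ f y :=
    Eventually.of_forall (hf.differentiable two_ne_zero)
  have hderiv_nonneg : ∀ᶠ y in 𝓝 x, 0 ≤ deriv f y :=
    ((hf.continuous_deriv one_le_two).continuousAt.eventually (lt_mem_nhds hpos)).mono
      fun _ hy => hy.le
  have hmono := eventually_monotoneOn_Icc_of_deriv_nonneg hdiff hderiv_nonneg
  refine (tendsto_symmetric_second_difference hdiff
    (hf.differentiable_deriv_two x).hasDerivAt).mono_left (nhdsGT_le_nhdsNE 0) |>.congr' ?_
  filter_upwards [nhdsWithin_le_nhds hmono, self_mem_nhdsWithin] with r hr hr₀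
  rw [hr.csSup_image_const_sub_setOf_abs_le (le_of_lt hr₀),
    hr.csInf_image_const_add_setOf_abs_le (le_of_lt hr₀)]
end
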